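/- arXiv:2410.20569 — 4 statements merged into one kernel-verified Lean document; each statement's English description precedes it below -/
import Mathlib

section
/- Let p be a prime with p ≡ 3 (mod 4), r > 0, and let v₃₅ = a·p^k, v₄₅ = b·p^l with a, b ∈ ℤ_p^× and 0 ≤ k, l < r. Suppose p^r divides v₃₅·v₄₅, 2p^r divides v₃₅² + v₄₅² and v₃₅² − v₄₅², and the coprimality conditions gcd(p^r, v₃₅, v₄₅, (v₃₅²+v₄₅²)/(2p^r)) = 1 and gcd(p^r, v₃₅, v₄₅, v₃₅v₄₅/p^r, (v₃₅²−v₄₅²)/(2p^r)) = 1 hold. Then r = 2·min(k, l). -/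
/-!
Write `m = min k l`. Since `-1` is not a square modulo `p`, `x² + y²` is a `p`-adic unit as soon as
`x` is, so `v₃₅² + v₄₅² = p^(2m) · (a² + (b p^(l-m))²)` (for `k ≤ l`) has valuation exactly `2m`.
As `2` is a unit, `v₃₅² + v₄₅² = 2 p^r c` gives `r ≤ 2m`; in particular `k, l > 0`, so `p^r`,
`v₃₅` and `v₄₅` lie in the maximal ideal and the first coprimality condition makes `c` a unit.
Comparing valuations once more gives `r = 2m`.
-/

theorem IsLocalRing.exists_isUnit_of_span_eq_top {R : Type*} [CommRing R] [IsLocalRing R]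
    {s : Set R} (hs : Ideal.span s = ⊤) : ∃ x ∈ s, IsUnit x := by
  by_contra! h
  refine (IsLocalRing.maximalIdeal.isMaximal R).ne_top (top_le_iff.mp ?_)
  rw [← hs, Ideal.span_le]
  exact fun x hx => (IsLocalRing.mem_maximalIdeal x).2 (h x hx)

namespace PadicInt

variable {p : ℕ} [Fact p.Prime]

theorem not_isUnit_p_pow {n : ℕ} (hn : n ≠ 0) : ¬IsUnit ((p : ℤ_[p]) ^ n) :=
  (isUnit_pow_iff hn).not.2 irreducible_p.not_isUnit

theorem isUnit_two (hp : p ≠ 2) : IsUnit (2 : ℤ_[p]) := by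
  rw [isUnit_iff, ← Nat.cast_two, norm_natCast_eq_one_iff]
  exact (Nat.coprime_primes Fact.out Nat.prime_two).2 hp

theorem isUnit_sq_add_sq_of_isUnit (hp4 : p % 4 = 3) {x : ℤ_[p]} (hx : IsUnit x) (y : ℤ_[p]) :
    IsUnit (x ^ 2 + y ^ 2) := by
  by_contra h
  rw [← mem_nonunits_iff, ← IsLocalRing.mem_maximalIdeal, ← ker_toZMod, RingHom.mem_ker,
    map_add, map_pow, map_pow, add_eq_zero_iff_eq_neg'] at h
  exact ZMod.mod_four_ne_three_of_sq_eq_neg_sq' (hx.map toZMod).ne_zero h hp4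

theorem exists_sq_add_sq_eq_unit_mul_p_pow (hp4 : p % 4 = 3) {a b : ℤ_[p]} (ha : IsUnit a)
    (hb : IsUnit b) (k l : ℕ) :
    ∃ u : ℤ_[p]ˣ, (a * (p : ℤ_[p]) ^ k) ^ 2 + (b * (p : ℤ_[p]) ^ l) ^ 2
      = u * (p : ℤ_[p]) ^ (2 * min k l) := by
  wlog hkl : k ≤ l generalizing a b k l
  · obtain ⟨u, hu⟩ := this hb ha l k (by omega)
    exact ⟨u, by rw [add_comm, hu, min_comm]⟩
  obtain ⟨n, rfl⟩ := Nat.exists_eq_add_of_le hkl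
  refine ⟨(isUnit_sq_add_sq_of_isUnit hp4 ha (b * (p : ℤ_[p]) ^ n)).unit, ?_⟩
  rw [IsUnit.unit_spec, min_eq_left hkl]
  ring

end PadicInt

theorem so42_alpha_coprimality_odd_p_general (p : ℕ) [Fact p.Prime] (hp4 : p % 4 = 3)
    (r k l : ℕ) (hr : 0 < r)
    (a b c : ℤ_[p]) (ha : IsUnit a) (hb : IsUnit b)
    (hc : (a * (p : ℤ_[p]) ^ k) ^ 2 + (b * (p : ℤ_[p]) ^ l) ^ 2
        = 2 * (p : ℤ_[p]) ^ r * c)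
    (h1 : Ideal.span ({(p : ℤ_[p]) ^ r, a * (p : ℤ_[p]) ^ k,
        b * (p : ℤ_[p]) ^ l, c} : Set ℤ_[p]) = ⊤) :
    r = 2 * min k l := by
  obtain ⟨u, hu⟩ := PadicInt.exists_sq_add_sq_eq_unit_mul_p_pow hp4 ha hb k l
  replace hc : (u : ℤ_[p]) * (p : ℤ_[p]) ^ (2 * min k l) = (p : ℤ_[p]) ^ r * (2 * c) := by
    rw [← hu, hc]; ring
  have hrm : r ≤ 2 * min k l :=
    (pow_dvd_pow_iff (NeZero.ne _) PadicInt.irreducible_p.not_isUnit).1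
      (Units.dvd_mul_left.1 ⟨_, hc⟩)
  have hcu : IsUnit c := by
    obtain ⟨x, hx, hxu⟩ := IsLocalRing.exists_isUnit_of_span_eq_top h1
    simp only [Set.mem_insert_iff, Set.mem_singleton_iff] at hx
    rcases hx with rfl | rfl | rfl | rfl
    · exact absurd hxu (PadicInt.not_isUnit_p_pow hr.ne')
    · exact absurd (IsUnit.mul_iff.1 hxu).2 (PadicInt.not_isUnit_p_pow (by omega))
    · exact absurd (IsUnit.mul_iff.1 hxu).2 (PadicInt.not_isUnit_p_pow (by omega))
    · exact hxu
  obtain ⟨v, hv⟩ := (PadicInt.isUnit_two (p := p) (by omega)).mul hcu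
  exact (IsDiscreteValuationRing.unit_mul_pow_congr_pow PadicInt.irreducible_p
    PadicInt.irreducible_p u v _ _ (by rw [hc, hv, mul_comm])).symm

/-- Let `p ≡ 3 (mod 4)` be prime, `r > 0`, and `v₃₅ = a·p^k`, `v₄₅ = b·p^l` with
`a, b ∈ ℤ_p^×`, `0 ≤ k, l < r`.  Suppose `p^r ∣ v₃₅·v₄₅` (with quotient `d`),
`2p^r` divides `v₃₅² + v₄₅²` (quotient `c`) and `v₃₅² − v₄₅²` (quotient `e`),
and the coprimality conditions
`gcd(p^r, v₃₅, v₄₅, (v₃₅²+v₄₅²)/(2p^r)) = 1` and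
`gcd(p^r, v₃₅, v₄₅, v₃₅v₄₅/p^r, (v₃₅²−v₄₅²)/(2p^r)) = 1` hold
(phrased as the corresponding ideals of `ℤ_p` being the unit ideal).
Then `r = 2·min(k, l)`. -/
theorem so42_alpha_coprimality_odd_p (p : ℕ) [Fact p.Prime] (hp4 : p % 4 = 3)
    (r k l : ℕ) (hr : 0 < r) (hk : k < r) (hl : l < r)
    (a b c d e : ℤ_[p]) (ha : IsUnit a) (hb : IsUnit b)
    (hc : (a * (p : ℤ_[p]) ^ k) ^ 2 + (b * (p : ℤ_[p]) ^ l) ^ 2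
        = 2 * (p : ℤ_[p]) ^ r * c)
    (hd : (a * (p : ℤ_[p]) ^ k) * (b * (p : ℤ_[p]) ^ l) = (p : ℤ_[p]) ^ r * d)
    (he : (a * (p : ℤ_[p]) ^ k) ^ 2 - (b * (p : ℤ_[p]) ^ l) ^ 2
        = 2 * (p : ℤ_[p]) ^ r * e)
    (h1 : Ideal.span ({(p : ℤ_[p]) ^ r, a * (p : ℤ_[p]) ^ k,
        b * (p : ℤ_[p]) ^ l, c} : Set ℤ_[p]) = ⊤)
    (h2 : Ideal.span ({(p : ℤ_[p]) ^ r, a * (p : ℤ_[p]) ^ k,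
        b * (p : ℤ_[p]) ^ l, d, e} : Set ℤ_[p]) = ⊤) :
    r = 2 * min k l :=
  so42_alpha_coprimality_odd_p_general p hp4 r k l hr a b c ha hb hc h1
end

section
/- Let p = 2 and r > 0, and let v₃₅ = a·2^k, v₄₅ = b·2^l with a, b ∈ ℤ₂^× and 0 ≤ k, l < r. If 2^r ∣ v₃₅v₄₅, 2^{r+1} ∣ v₃₅² + v₄₅² and v₃₅² − v₄₅², gcd(2^r, v₃₅, v₄₅, (v₃₅²+v₄₅²)/2^{r+1}·2) = 1 and gcd(2^r, v₃₅, v₄₅, v₃₅v₄₅/2^r, (v₃₅²−v₄₅²)/2^{r+1}·2) = 1, then r = 2·min(k,l) − 1 when k ≠ l, and r = 2k when k = l. -/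
/-!
Write `v₃₅² + v₄₅² = 2^m·u` with `u` a unit. If `k ≠ l` then `m = 2·min(k,l)`; if `k = l`
then `m = 2k + 1`, because `a² ≡ b² ≡ 1 mod 8` makes `a² + b²` twice a unit. Comparing with
`v₃₅² + v₄₅² = 2^(r+1)·c` gives `r + 1 ≤ m`, so `k, l ≥ 1`. Then `c` is the only generator of
the first coprimality ideal that can be a unit in the local ring `ℤ₂`, which forces `m = r + 1`.
-/

open IsLocalRing

theorem le_and_isUnit_iff_of_pow_mul_eq_pow_mul {M : Type*} [CommMonoidWithZero M]
    [IsCancelMulZero M] {p u c : M} {m n : ℕ} (hp₀ : p ≠ 0) (hp : ¬IsUnit p) (hu : IsUnit u)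
    (h : p ^ m * u = p ^ n * c) : n ≤ m ∧ (IsUnit c ↔ n = m) := by
  obtain ⟨u, rfl⟩ := hu
  have hnm : n ≤ m := by
    refine (pow_dvd_pow_iff hp₀ hp).mp ⟨c * ↑u⁻¹, ?_⟩
    rw [← mul_assoc, ← h, mul_assoc, Units.mul_inv, mul_one]
  have hc : c = p ^ (m - n) * u := by
    refine mul_left_cancel₀ (pow_ne_zero n hp₀) ?_
    rw [← h, ← mul_assoc, ← pow_add, Nat.add_sub_cancel' hnm]
  refine ⟨hnm, ?_⟩
  rw [hc, Units.isUnit_mul_units]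
  rcases Nat.eq_zero_or_pos (m - n) with hmn | hmn
  · simp only [hmn, pow_zero, isUnit_one, true_iff]
    omega
  · rw [isUnit_pow_iff hmn.ne']
    exact iff_of_false hp (by omega)

namespace IsLocalRing

variable {R : Type*} [CommRing R] [IsLocalRing R]

theorem exists_isUnit_of_span_eq_top_s8 {S : Set R} (h : Ideal.span S = ⊤) :
    ∃ x ∈ S, IsUnit x := by
  by_contra! hS
  refine (maximalIdeal.isMaximal R).ne_top (top_le_iff.mp ?_)
  rw [← h, Ideal.span_le]
  exact fun x hx => (mem_maximalIdeal x).mpr (hS x hx)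

theorem isUnit_add_of_mem_maximalIdeal {u y : R} (hu : IsUnit u) (hy : y ∈ maximalIdeal R) :
    IsUnit (u + y) := by
  by_contra h
  have := (maximalIdeal R).sub_mem ((mem_maximalIdeal _).mpr h) hy
  rw [add_sub_cancel_right] at this
  exact notMem_maximalIdeal.mpr hu this

end IsLocalRing

namespace PadicInt

theorem not_isUnit_two : ¬IsUnit (2 : ℤ_[2]) := by
  exact_mod_cast (prime_p (p := 2)).not_isUnit

theorem mem_maximalIdeal_iff_two_dvd {x : ℤ_[2]} : x ∈ maximalIdeal ℤ_[2] ↔ 2 ∣ x := by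
  rw [maximalIdeal_eq_span_p, Ideal.mem_span_singleton, Nat.cast_ofNat]

theorem two_dvd_iff_toZMod_eq_zero {x : ℤ_[2]} : 2 ∣ x ↔ toZMod x = 0 := by
  rw [← mem_maximalIdeal_iff_two_dvd, ← ker_toZMod, RingHom.mem_ker]

theorem two_dvd_sub_one_of_isUnit {a : ℤ_[2]} (ha : IsUnit a) : 2 ∣ a - 1 := by
  have hne : toZMod a ≠ 0 := fun h =>
    not_isUnit_two (isUnit_of_dvd_unit (two_dvd_iff_toZMod_eq_zero.mpr h) ha)
  rw [two_dvd_iff_toZMod_eq_zero, map_sub, map_one]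
  generalize toZMod a = z at hne ⊢
  decide +revert

theorem two_dvd_mul_add_one (t : ℤ_[2]) : 2 ∣ t * (t + 1) := by
  rw [two_dvd_iff_toZMod_eq_zero, map_mul, map_add, map_one]
  generalize toZMod t = z
  decide +revert

theorem eight_dvd_sq_sub_one_of_isUnit {a : ℤ_[2]} (ha : IsUnit a) : 8 ∣ a ^ 2 - 1 := by
  obtain ⟨t, ht⟩ := two_dvd_sub_one_of_isUnit ha
  obtain ⟨s, hs⟩ := two_dvd_mul_add_one t
  exact ⟨s, by linear_combination (a + 1 + 2 * t) * ht + 4 * hs⟩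

theorem exists_isUnit_sq_add_sq_eq_two_mul {a b : ℤ_[2]} (ha : IsUnit a) (hb : IsUnit b) :
    ∃ u, IsUnit u ∧ a ^ 2 + b ^ 2 = 2 * u := by
  obtain ⟨s, hs⟩ := eight_dvd_sq_sub_one_of_isUnit ha
  obtain ⟨t, ht⟩ := eight_dvd_sq_sub_one_of_isUnit hb
  refine ⟨1 + 2 * (2 * (s + t)), isUnit_add_of_mem_maximalIdeal isUnit_one ?_, ?_⟩
  · exact mem_maximalIdeal_iff_two_dvd.mpr (dvd_mul_right 2 _)
  · linear_combination hs + ht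

theorem exists_isUnit_sq_add_sq_eq_of_lt {a : ℤ_[2]} (ha : IsUnit a) (b : ℤ_[2]) {k l : ℕ}
    (hkl : k < l) :
    ∃ u, IsUnit u ∧ (a * 2 ^ k) ^ 2 + (b * 2 ^ l) ^ 2 = 2 ^ (2 * k) * u := by
  obtain ⟨j, rfl⟩ := Nat.exists_eq_add_of_lt hkl
  refine ⟨a ^ 2 + 2 * (2 ^ (2 * j + 1) * b ^ 2),
    isUnit_add_of_mem_maximalIdeal (ha.pow 2) ?_, by ring⟩
  exact mem_maximalIdeal_iff_two_dvd.mpr (dvd_mul_right 2 _)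

theorem exists_isUnit_sq_add_sq_eq_of_eq {a b : ℤ_[2]} (ha : IsUnit a) (hb : IsUnit b)
    (k : ℕ) : ∃ u, IsUnit u ∧ (a * 2 ^ k) ^ 2 + (b * 2 ^ k) ^ 2 = 2 ^ (2 * k + 1) * u := by
  obtain ⟨u, hu, hab⟩ := exists_isUnit_sq_add_sq_eq_two_mul ha hb
  exact ⟨u, hu, by linear_combination 2 ^ (2 * k) * hab⟩

theorem succ_eq_of_sq_add_sq_eq_pow_mul {r k l m : ℕ} {a b c u : ℤ_[2]} (hr : 0 < r)
    (hu : IsUnit u) (hm : m ≤ 2 * min k l + 1)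
    (hsum : (a * 2 ^ k) ^ 2 + (b * 2 ^ l) ^ 2 = 2 ^ m * u)
    (hc : (a * 2 ^ k) ^ 2 + (b * 2 ^ l) ^ 2 = 2 * 2 ^ r * c)
    (h1 : Ideal.span ({2 ^ r, a * 2 ^ k, b * 2 ^ l, c} : Set ℤ_[2]) = ⊤) :
    r + 1 = m := by
  obtain ⟨hle, hc_unit⟩ := le_and_isUnit_iff_of_pow_mul_eq_pow_mul two_ne_zero not_isUnit_two
    hu (hsum.symm.trans (by rw [hc, pow_succ']))
  have not_isUnit_two_pow {n : ℕ} (hn : n ≠ 0) : ¬IsUnit ((2 : ℤ_[2]) ^ n) :=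
    fun h => not_isUnit_two ((isUnit_pow_iff hn).mp h)
  refine hc_unit.mp ?_
  obtain ⟨x, hx, hx_unit⟩ := exists_isUnit_of_span_eq_top_s8 h1
  simp only [Set.mem_insert_iff, Set.mem_singleton_iff] at hx
  rcases hx with rfl | rfl | rfl | rfl
  · exact absurd hx_unit (not_isUnit_two_pow hr.ne')
  · exact absurd (IsUnit.mul_iff.mp hx_unit).2 (not_isUnit_two_pow (by omega))
  · exact absurd (IsUnit.mul_iff.mp hx_unit).2 (not_isUnit_two_pow (by omega))
  · exact hx_unit

end PadicInt

open PadicInt in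
theorem so42_alpha_coprimality_p_two_general (r k l : ℕ) (hr : 0 < r)
    (a b c : ℤ_[2]) (ha : IsUnit a) (hb : IsUnit b)
    (hc : (a * (2 : ℤ_[2]) ^ k) ^ 2 + (b * (2 : ℤ_[2]) ^ l) ^ 2
        = 2 * (2 : ℤ_[2]) ^ r * c)
    (h1 : Ideal.span ({(2 : ℤ_[2]) ^ r, a * (2 : ℤ_[2]) ^ k,
        b * (2 : ℤ_[2]) ^ l, c} : Set ℤ_[2]) = ⊤) :
    (k ≠ l → r = 2 * min k l - 1) ∧ (k = l → r = 2 * k) := by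
  rcases lt_trichotomy k l with hkl | rfl | hlk
  · obtain ⟨u, hu, hsum⟩ := exists_isUnit_sq_add_sq_eq_of_lt ha b hkl
    have := succ_eq_of_sq_add_sq_eq_pow_mul hr hu (by omega) hsum hc h1
    omega
  · obtain ⟨u, hu, hsum⟩ := exists_isUnit_sq_add_sq_eq_of_eq ha hb k
    have := succ_eq_of_sq_add_sq_eq_pow_mul hr hu (by omega) hsum hc h1
    omega
  · obtain ⟨u, hu, hsum⟩ := exists_isUnit_sq_add_sq_eq_of_lt hb a hlk
    rw [add_comm] at hsum
    have := succ_eq_of_sq_add_sq_eq_pow_mul hr hu (by omega) hsum hc h1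
    omega

/-- Let `p = 2`, `r > 0`, and `v₃₅ = a·2^k`, `v₄₅ = b·2^l` with `a, b ∈ ℤ₂^×`,
`0 ≤ k, l < r`.  Suppose `2^r ∣ v₃₅·v₄₅` (with quotient `d`), `2^{r+1} = 2·2^r`
divides `v₃₅² + v₄₅²` (quotient `c`) and `v₃₅² − v₄₅²` (quotient `e`), and the
coprimality conditions `gcd(2^r, v₃₅, v₄₅, (v₃₅²+v₄₅²)/(2·2^r)) = 1` and
`gcd(2^r, v₃₅, v₄₅, v₃₅v₄₅/2^r, (v₃₅²−v₄₅²)/(2·2^r)) = 1` hold (phrased as the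
corresponding ideals of `ℤ₂` being the unit ideal).  Then `r = 2·min(k,l) − 1`
when `k ≠ l`, and `r = 2k` when `k = l`. -/
theorem so42_alpha_coprimality_p_two (r k l : ℕ) (hr : 0 < r) (hk : k < r) (hl : l < r)
    (a b c d e : ℤ_[2]) (ha : IsUnit a) (hb : IsUnit b)
    (hc : (a * (2 : ℤ_[2]) ^ k) ^ 2 + (b * (2 : ℤ_[2]) ^ l) ^ 2
        = 2 * (2 : ℤ_[2]) ^ r * c)
    (hd : (a * (2 : ℤ_[2]) ^ k) * (b * (2 : ℤ_[2]) ^ l) = (2 : ℤ_[2]) ^ r * d)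
    (he : (a * (2 : ℤ_[2]) ^ k) ^ 2 - (b * (2 : ℤ_[2]) ^ l) ^ 2
        = 2 * (2 : ℤ_[2]) ^ r * e)
    (h1 : Ideal.span ({(2 : ℤ_[2]) ^ r, a * (2 : ℤ_[2]) ^ k,
        b * (2 : ℤ_[2]) ^ l, c} : Set ℤ_[2]) = ⊤)
    (h2 : Ideal.span ({(2 : ℤ_[2]) ^ r, a * (2 : ℤ_[2]) ^ k,
        b * (2 : ℤ_[2]) ^ l, d, e} : Set ℤ_[2]) = ⊤) :
    (k ≠ l → r = 2 * min k l - 1) ∧ (k = l → r = 2 * k) :=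
  so42_alpha_coprimality_p_two_general r k l hr a b c ha hb hc h1
end

section
/- Let p ≡ 3 (mod 4) be prime and m₂, m₃, n₂, n₃ ∈ ℤ with gcd(n₂n₃, p) = 1 and gcd(m₂n₃ − m₃n₂, p) = 1 (nondegeneracy). Let t ≥ 1. Then the number of pairs (a, b) ∈ (ℤ/p^tℤ)² with gcd(a, b, p) = 1 satisfying the simultaneous congruences −2m₂(a²+b²)⁻¹ + 4(m₂a − m₃b)a(a²+b²)⁻² + n₂ ≡ 0 (mod p^t) and 2m₃(a²+b²)⁻¹ + 4(m₂a − m₃b)b(a²+b²)⁻² + n₃ ≡ 0 (mod p^t) is bounded by an absolute constant (independent of t). -/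
/-! Put `X = a + b i` in `R = (ℤ/p^t)[i]`. Since `p ≡ 3 (mod 4)` is inert, `R` is a local ring
whose units are the elements with a unit coordinate, and the two congruences imply
`X² (n₂ - n₃ i) = -2m₂ + 2m₃ i`. As `n₂ - n₃ i` is a unit, `X²` is the same for all solutions,
and in a local ring in which `2` is a unit, `X² = Y²` with `X` a unit forces `Y = ±X`. -/

open IsLocalRing

theorem eq_or_eq_neg_of_sq_eq_sq_of_isUnit {S : Type*} [CommRing S] [IsLocalRing S] {x y : S}
    (h2 : IsUnit (2 : S)) (hx : IsUnit x) (h : y ^ 2 = x ^ 2) : y = x ∨ y = -x := by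
  have hprod : (x - y) * (x + y) = 0 := by linear_combination -h
  have hsum : IsUnit ((x - y) + (x + y)) := by
    rw [show (x - y) + (x + y) = 2 * x by ring]
    exact h2.mul hx
  rcases isUnit_or_isUnit_of_isUnit_add hsum with hu | hu
  · right
    linear_combination hu.mul_left_cancel (hprod.trans (mul_zero _).symm)
  · left
    linear_combination -hu.mul_right_cancel (hprod.trans (zero_mul _).symm)

theorem isUnit_sq_add_sq_of_isLocalHom {R K : Type*} [CommRing R] [Field K] (f : R →+* K)
    [IsLocalHom f] (hK : ¬IsSquare (-1 : K)) {x y : R} (h : IsUnit x ∨ IsUnit y) :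
    IsUnit (x ^ 2 + y ^ 2) := by
  refine isUnit_of_map_unit f _ (isUnit_iff_ne_zero.2 fun h0 => ?_)
  rw [map_add, map_pow, map_pow] at h0
  have hfy : f y ≠ 0 := by
    rintro hy
    rw [hy, zero_pow two_ne_zero, add_zero, pow_eq_zero_iff two_ne_zero] at h0
    rcases h with h | h
    · exact (h.map f).ne_zero h0
    · exact (h.map f).ne_zero hy
  exact hK ⟨f x / f y, by field_simp; linear_combination -h0⟩

theorem Set.ncard_le_two_of_forall_eq_or_eq_neg {α : Type*} [Neg α] {s : Set α}
    (h : ∀ z ∈ s, ∀ w ∈ s, z = w ∨ z = -w) : s.ncard ≤ 2 := by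
  rcases s.eq_empty_or_nonempty with rfl | ⟨w, hw⟩
  · simp
  calc s.ncard ≤ ({w, -w} : Set α).ncard :=
        Set.ncard_le_ncard (fun z hz => h z hz w hw) (Set.toFinite _)
    _ ≤ 2 := (Set.ncard_insert_le _ _).trans (by rw [Set.ncard_singleton])

namespace QuadraticAlgebra

variable {R : Type*} [CommRing R]

theorem norm_eq_re_sq_add_im_sq (z : QuadraticAlgebra R (-1) 0) :
    z.norm = z.re ^ 2 + z.im ^ 2 := by
  rw [norm_def]
  ring

-- Modulo `(a² + b²) v = 1`, `X² (n₂ - n₃ i) - (-2m₂ + 2m₃ i) = X² (e₁ - i e₂)`, `X = a + b i`.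
theorem mk_sq_mul_mk_eq_of_stationary {m₂ m₃ n₂ n₃ a b v : R} (hv : (a ^ 2 + b ^ 2) * v = 1)
    (e₁ : -2 * m₂ * v + 4 * (m₂ * a - m₃ * b) * a * v ^ 2 + n₂ = 0)
    (e₂ : 2 * m₃ * v + 4 * (m₂ * a - m₃ * b) * b * v ^ 2 + n₃ = 0) :
    (⟨a, b⟩ : QuadraticAlgebra R (-1) 0) ^ 2 * ⟨n₂, -n₃⟩ = ⟨-2 * m₂, 2 * m₃⟩ := by
  set k := m₂ * a - m₃ * b
  ext <;> simp only [sq, re_mul, im_mul]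
  · linear_combination (a ^ 2 - b ^ 2) * e₁ + 2 * a * b * e₂ - (2 * m₂ + 4 * a * k * v) * hv
  · linear_combination 2 * a * b * e₁ - (a ^ 2 - b ^ 2) * e₂ + (2 * m₃ - 4 * b * k * v) * hv

variable [IsLocalRing R]

theorem isUnit_iff_isUnit_re_or_isUnit_im
    (h : ∀ x y : R, IsUnit x ∨ IsUnit y → IsUnit (x ^ 2 + y ^ 2))
    {z : QuadraticAlgebra R (-1) 0} : IsUnit z ↔ IsUnit z.re ∨ IsUnit z.im := by
  rw [isUnit_iff_norm_isUnit, norm_eq_re_sq_add_im_sq]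
  refine ⟨fun hz => ?_, h _ _⟩
  by_contra! hnot
  rw [sq, sq] at hz
  exact nonunits_add (mul_mem_nonunits_left hnot.1) (mul_mem_nonunits_left hnot.2) hz

theorem isLocalRing_of_isUnit_sq_add_sq
    (h : ∀ x y : R, IsUnit x ∨ IsUnit y → IsUnit (x ^ 2 + y ^ 2)) :
    IsLocalRing (QuadraticAlgebra R (-1) 0) :=
  .of_nonunits_add fun z w hz hw => by
    simp only [mem_nonunits_iff, isUnit_iff_isUnit_re_or_isUnit_im h, not_or, re_add,
      im_add] at *
    exact ⟨nonunits_add hz.1 hw.1, nonunits_add hz.2 hw.2⟩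

end QuadraticAlgebra

namespace ZMod

variable {p t : ℕ}

theorem isLocalRing_prime_pow (hp : p.Prime) (ht : t ≠ 0) : IsLocalRing (ZMod (p ^ t)) :=
  have : Fact p.Prime := ⟨hp⟩
  have : Fact (1 < p ^ t) := ⟨Nat.one_lt_pow ht hp.one_lt⟩
  .of_surjective' (PadicInt.toZModPow t) (ringHom_surjective _)

theorem isUnit_sq_add_sq_of_prime_pow (hp : p.Prime) (hp3 : p % 4 = 3) (ht : t ≠ 0)
    {x y : ZMod (p ^ t)} (h : IsUnit x ∨ IsUnit y) : IsUnit (x ^ 2 + y ^ 2) :=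
  have : Fact p.Prime := ⟨hp⟩
  have := isLocalRing_prime_pow hp ht
  have := IsLocalHom.of_surjective (castHom (dvd_pow_self p ht) (ZMod p)) (ringHom_surjective _)
  isUnit_sq_add_sq_of_isLocalHom (castHom (dvd_pow_self p ht) (ZMod p))
    (fun h => exists_sq_eq_neg_one_iff.1 h hp3) h

theorem isUnit_intCast_prime_pow (hp : p.Prime) {n : ℤ} (hn : ¬(p : ℤ) ∣ n) :
    IsUnit (n : ZMod (p ^ t)) := by
  rw [coe_int_isUnit_iff_isCoprime, Nat.cast_pow]
  exact ((Nat.prime_iff_prime_int.1 hp).irreducible.coprime_iff_not_dvd.2 hn).pow_left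

end ZMod

/-- Let `p ≡ 3 (mod 4)` be prime and `m₂, m₃, n₂, n₃ ∈ ℤ` with `p ∤ n₂n₃` and
`p ∤ m₂n₃ − m₃n₂`.  For any `t ≥ 1`, the number of pairs `(a, b) ∈ (ℤ/p^tℤ)²`
with `gcd(a, b, p) = 1` satisfying
`−2m₂(a²+b²)⁻¹ + 4(m₂a − m₃b)a(a²+b²)⁻² + n₂ ≡ 0 (mod p^t)` and
`2m₃(a²+b²)⁻¹ + 4(m₂a − m₃b)b(a²+b²)⁻² + n₃ ≡ 0 (mod p^t)`
is bounded by an absolute constant, independent of all the parameters. -/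
theorem stationary_point_count_bounded :
    ∃ C : ℕ, ∀ (p t : ℕ) (m₂ m₃ n₂ n₃ : ℤ), p.Prime → p % 4 = 3 → 1 ≤ t →
      ¬ (p : ℤ) ∣ n₂ * n₃ → ¬ (p : ℤ) ∣ (m₂ * n₃ - m₃ * n₂) →
      {z : ZMod (p ^ t) × ZMod (p ^ t) |
        (IsUnit z.1 ∨ IsUnit z.2) ∧
        (-2 * (m₂ : ZMod (p ^ t)) * (z.1 ^ 2 + z.2 ^ 2)⁻¹
          + 4 * ((m₂ : ZMod (p ^ t)) * z.1 - (m₃ : ZMod (p ^ t)) * z.2) * z.1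
              * ((z.1 ^ 2 + z.2 ^ 2)⁻¹) ^ 2 + (n₂ : ZMod (p ^ t)) = 0) ∧
        (2 * (m₃ : ZMod (p ^ t)) * (z.1 ^ 2 + z.2 ^ 2)⁻¹
          + 4 * ((m₂ : ZMod (p ^ t)) * z.1 - (m₃ : ZMod (p ^ t)) * z.2) * z.2
              * ((z.1 ^ 2 + z.2 ^ 2)⁻¹) ^ 2 + (n₃ : ZMod (p ^ t)) = 0)}.ncard
        ≤ C := by
  refine ⟨2, fun p t m₂ m₃ n₂ n₃ hp hp3 ht hn _ => ?_⟩
  replace ht : t ≠ 0 := Nat.one_le_iff_ne_zero.1 ht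
  have hsq (x y : ZMod (p ^ t)) := ZMod.isUnit_sq_add_sq_of_prime_pow (x := x) (y := y) hp hp3 ht
  have := ZMod.isLocalRing_prime_pow hp ht
  have := QuadraticAlgebra.isLocalRing_of_isUnit_sq_add_sq hsq
  have hunit {z : QuadraticAlgebra (ZMod (p ^ t)) (-1) 0} : IsUnit z.re ∨ IsUnit z.im → IsUnit z :=
    (QuadraticAlgebra.isUnit_iff_isUnit_re_or_isUnit_im hsq).2
  have hν : IsUnit (⟨n₂, -n₃⟩ : QuadraticAlgebra (ZMod (p ^ t)) (-1) 0) :=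
    hunit (.inl (ZMod.isUnit_intCast_prime_pow hp fun h => hn (h.mul_right n₃)))
  have h2 : IsUnit (2 : QuadraticAlgebra (ZMod (p ^ t)) (-1) 0) := by
    have hp2 : ¬(p : ℤ) ∣ 2 := fun h => by have := Int.le_of_dvd two_pos h; omega
    refine hunit (.inl ?_)
    simpa [QuadraticAlgebra.re_ofNat] using ZMod.isUnit_intCast_prime_pow (t := t) hp hp2
  apply Set.ncard_le_two_of_forall_eq_or_eq_neg
  rintro ⟨a, b⟩ ⟨hab, e₁, e₂⟩ ⟨c, d⟩ ⟨hcd, e₃, e₄⟩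
  have hX := QuadraticAlgebra.mk_sq_mul_mk_eq_of_stationary
    (ZMod.mul_inv_of_unit _ (hsq _ _ hab)) e₁ e₂
  have hY := QuadraticAlgebra.mk_sq_mul_mk_eq_of_stationary
    (ZMod.mul_inv_of_unit _ (hsq _ _ hcd)) e₃ e₄
  rcases eq_or_eq_neg_of_sq_eq_sq_of_isUnit h2 (hunit hcd)
      (hν.mul_right_cancel (hX.trans hY.symm)) with h | h
  · obtain ⟨rfl, rfl⟩ := QuadraticAlgebra.mk.inj h
    exact .inl rfl
  · obtain ⟨rfl, rfl⟩ := QuadraticAlgebra.mk.inj (h.trans (QuadraticAlgebra.neg_mk c d))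
    exact .inr rfl
end

section
/- Let p ≡ 3 (mod 4) be prime, t ≥ 1, and m₂, m₃, n₂, n₃ ∈ ℤ. Then S₄(m₂,m₃,n₂,n₃; p^{4t}) := Σ_{a,b mod p^{2t}, gcd(a,b,p)=1} e(−2(m₂a − m₃b)(a²+b²)⁻¹ / p^{2t}) e((n₂a + n₃b)/p^{2t}) equals p^{2t} · Σ' e((−2(m₂a−m₃b)(a²+b²)⁻¹ + n₂a + n₃b)/p^{2t}), where Σ' runs over a, b mod p^t with gcd(a,b,p)=1 satisfying f(a,b) ≡ g(a,b) ≡ 0 (mod p^t), with f(a,b) = −2m₂(a²+b²)⁻¹ + 4(m₂a−m₃b)a(a²+b²)⁻² + n₂ and g(a,b) = 2m₃(a²+b²)⁻¹ + 4(m₂a−m₃b)b(a²+b²)⁻² + n₃. -/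
/-!
Put `q = p^t`, so `p^{2t} = q²`, and write each residue mod `q²` as `x + q u` with `x, u` mod `q`.
Because `q² ≡ 0`, the phase `φ` is affine on each fibre:
`φ(x + q u, y + q v) = φ(x, y) + q (f(x, y) u + g(x, y) v)` with `f, g` its partial derivatives;
this needs `x² + y²` to be a unit, which holds since `-1` is not a square mod `p ≡ 3 (mod 4)`.
Summing the additive character over `u, v` then gives `q² = p^{2t}` when `f ≡ g ≡ 0 (mod q)`
and `0` otherwise.
-/

/-- `e(q) = exp(2πiq)`. -/
noncomputable def eQ (q : ℚ) : ℂ := Complex.exp (2 * Real.pi * Complex.I * q)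

lemma eQ_val_div_eq_stdAddChar {N : ℕ} [NeZero N] (x : ZMod N) :
    eQ ((x.val : ℚ) / (N : ℚ)) = ZMod.stdAddChar x := by
  rw [ZMod.stdAddChar_apply, ZMod.toCircle_apply, eQ]
  push_cast
  ring_nf

theorem ZMod.stdAddChar_natCast_mul_of_eq_mul {q d n : ℕ} [NeZero n] [NeZero q]
    (hn : n = q * d) (c : ZMod n) :
    ZMod.stdAddChar ((d : ZMod n) * c)
      = ZMod.stdAddChar (ZMod.castHom (Dvd.intro d hn.symm) (ZMod q) c) := by
  have hd : (d : ℂ) ≠ 0 := by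
    have : d ≠ 0 := right_ne_zero_of_mul (hn ▸ NeZero.ne n)
    exact_mod_cast this
  rw [← ZMod.intCast_zmod_cast c, map_intCast, ← Int.cast_natCast, ← Int.cast_mul,
    ZMod.stdAddChar_coe, ZMod.stdAddChar_coe, show (n : ℂ) = q * d by exact_mod_cast hn]
  push_cast
  field_simp

theorem ZMod.sum_eq_sum_sum_val_add_mul_val {M : Type*} [AddCommMonoid M] {q d n : ℕ}
    [NeZero q] [NeZero d] [NeZero n] (hn : n = q * d) (f : ZMod n → M) :
    ∑ a : ZMod n, f a
      = ∑ x : ZMod q, ∑ u : ZMod d, f ((x.val + q * u.val : ℕ) : ZMod n) := by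
  have hlt : ∀ (x : ZMod q) (u : ZMod d), x.val + q * u.val < n := fun x u => by
    have := x.val_lt; have := u.val_lt
    subst hn; nlinarith
  have hbij : Function.Bijective
      (fun xu : ZMod q × ZMod d => ((xu.1.val + q * xu.2.val : ℕ) : ZMod n)) := by
    refine (Fintype.bijective_iff_injective_and_card _).mpr ⟨?_, by simp [hn]⟩
    rintro ⟨x, u⟩ ⟨x', u'⟩ h
    replace h := congrArg ZMod.val h
    simp only [ZMod.val_cast_of_lt (hlt _ _)] at h
    have hx : x.val = x'.val := by
      simpa [Nat.add_mul_mod_self_left, Nat.mod_eq_of_lt x.val_lt, Nat.mod_eq_of_lt x'.val_lt]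
        using congrArg (· % q) h
    have hu : u.val = u'.val := by
      rw [hx] at h
      exact Nat.eq_of_mul_eq_mul_left (Nat.pos_of_neZero q) (Nat.add_left_cancel h)
    simp [ZMod.val_injective _ hx, ZMod.val_injective _ hu]
  rw [← hbij.sum_comp, Fintype.sum_prod_type]

theorem Nat.Prime.dvd_and_dvd_of_dvd_sq_add_sq {p : ℕ} [Fact p.Prime] (hp4 : p % 4 = 3)
    {a b : ℕ} (h : p ∣ a ^ 2 + b ^ 2) : p ∣ a ∧ p ∣ b := by
  have hab : (a : ZMod p) ^ 2 = -(b : ZMod p) ^ 2 := by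
    rw [eq_neg_iff_add_eq_zero]
    exact_mod_cast (ZMod.natCast_eq_zero_iff _ p).mpr h
  simp only [← ZMod.natCast_eq_zero_iff]
  exact ⟨by_contra fun ha => ZMod.mod_four_ne_three_of_sq_eq_neg_sq ha hab hp4,
    by_contra fun hb => ZMod.mod_four_ne_three_of_sq_eq_neg_sq' hb hab hp4⟩

section Phase

variable {n : ℕ} (m₂ m₃ n₂ n₃ : ℤ)

noncomputable def phase (a b : ZMod n) : ZMod n :=
  -2 * ((m₂ : ZMod n) * a - (m₃ : ZMod n) * b) * (a ^ 2 + b ^ 2)⁻¹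
    + (n₂ : ZMod n) * a + (n₃ : ZMod n) * b

noncomputable def phaseDerivFst (a b : ZMod n) : ZMod n :=
  -2 * (m₂ : ZMod n) * (a ^ 2 + b ^ 2)⁻¹
    + 4 * ((m₂ : ZMod n) * a - (m₃ : ZMod n) * b) * a * ((a ^ 2 + b ^ 2)⁻¹) ^ 2
    + (n₂ : ZMod n)

noncomputable def phaseDerivSnd (a b : ZMod n) : ZMod n :=
  2 * (m₃ : ZMod n) * (a ^ 2 + b ^ 2)⁻¹
    + 4 * ((m₂ : ZMod n) * a - (m₃ : ZMod n) * b) * b * ((a ^ 2 + b ^ 2)⁻¹) ^ 2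
    + (n₃ : ZMod n)

theorem phase_add_mul_of_sq_eq_zero {ε : ZMod n} (hε : ε ^ 2 = 0) {a b : ZMod n}
    (hS : IsUnit (a ^ 2 + b ^ 2)) (u v : ZMod n) :
    phase m₂ m₃ n₂ n₃ (a + ε * u) (b + ε * v)
      = phase m₂ m₃ n₂ n₃ a b
        + ε * (phaseDerivFst m₂ m₃ n₂ a b * u + phaseDerivSnd m₂ m₃ n₃ a b * v) := by
  set S := a ^ 2 + b ^ 2
  set E := 2 * (a * u + b * v)
  have hSS : S * S⁻¹ = 1 := ZMod.mul_inv_of_unit S hS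
  have hsum : (a + ε * u) ^ 2 + (b + ε * v) ^ 2 = S + ε * E := by
    linear_combination (u ^ 2 + v ^ 2) * hε
  -- `1 / (S + εE) = 1/S - εE/S²` since `ε² = 0`
  have hinv : ((a + ε * u) ^ 2 + (b + ε * v) ^ 2)⁻¹ = S⁻¹ - ε * E * S⁻¹ ^ 2 := by
    rw [hsum]
    apply ZMod.inv_eq_of_mul_eq_one
    linear_combination (1 - ε * E * S⁻¹) * hSS - E ^ 2 * S⁻¹ ^ 2 * hε
  simp only [phase, phaseDerivFst, phaseDerivSnd, hinv]
  linear_combination (2 * ((m₂ : ZMod n) * u - (m₃ : ZMod n) * v) * E * S⁻¹ ^ 2) * hε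

variable {q : ℕ} (h : q ∣ n) {a b : ZMod n} (hS : IsUnit (a ^ 2 + b ^ 2))
include h hS

theorem castHom_inv_sq_add_sq :
    ZMod.castHom h (ZMod q) (a ^ 2 + b ^ 2)⁻¹
      = (ZMod.castHom h (ZMod q) a ^ 2 + ZMod.castHom h (ZMod q) b ^ 2)⁻¹ := by
  symm
  apply ZMod.inv_eq_of_mul_eq_one
  rw [← map_pow, ← map_pow, ← map_add, ← map_mul, ZMod.mul_inv_of_unit _ hS, map_one]

theorem castHom_phaseDerivFst :
    ZMod.castHom h (ZMod q) (phaseDerivFst m₂ m₃ n₂ a b)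
      = phaseDerivFst m₂ m₃ n₂ (ZMod.castHom h (ZMod q) a) (ZMod.castHom h (ZMod q) b) := by
  simp only [phaseDerivFst, map_add, map_mul, map_sub, map_pow, map_neg, map_ofNat,
    map_intCast, castHom_inv_sq_add_sq h hS]

theorem castHom_phaseDerivSnd :
    ZMod.castHom h (ZMod q) (phaseDerivSnd m₂ m₃ n₃ a b)
      = phaseDerivSnd m₂ m₃ n₃ (ZMod.castHom h (ZMod q) a) (ZMod.castHom h (ZMod q) b) := by
  simp only [phaseDerivSnd, map_add, map_mul, map_sub, map_pow, map_ofNat, map_intCast,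
    castHom_inv_sq_add_sq h hS]

end Phase

theorem sum_stdAddChar_phase_fiber {q n : ℕ} [NeZero q] [NeZero n] (hn : n = q * q)
    (m₂ m₃ n₂ n₃ : ℤ) (x y : ZMod q)
    (hS : IsUnit ((x.val : ZMod n) ^ 2 + (y.val : ZMod n) ^ 2)) :
    ∑ u : ZMod q, ∑ v : ZMod q, ZMod.stdAddChar (phase m₂ m₃ n₂ n₃
        ((x.val + q * u.val : ℕ) : ZMod n) ((y.val + q * v.val : ℕ) : ZMod n))
      = n * if phaseDerivFst m₂ m₃ n₂ x y = 0 ∧ phaseDerivSnd m₂ m₃ n₃ x y = 0 then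
          ZMod.stdAddChar (phase m₂ m₃ n₂ n₃ (x.val : ZMod n) (y.val : ZMod n))
        else 0 := by
  have hq : (q : ZMod n) ^ 2 = 0 := by
    rw [← Nat.cast_pow, sq, ← hn, ZMod.natCast_self]
  have hdvd : q ∣ n := Dvd.intro q hn.symm
  have hval : ∀ z : ZMod q, ZMod.castHom hdvd (ZMod q) (z.val : ZMod n) = z := by simp
  have hchar : ∀ c : ZMod q, ∑ u : ZMod q, ZMod.stdAddChar (c * u)
      = if c = 0 then (q : ℂ) else 0 := fun c => by
    simpa [mul_comm] using AddChar.sum_mulShift c (ZMod.isPrimitive_stdAddChar q)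
  simp only [Nat.cast_add, Nat.cast_mul, phase_add_mul_of_sq_eq_zero m₂ m₃ n₂ n₃ hq hS,
    AddChar.map_add_eq_mul, ZMod.stdAddChar_natCast_mul_of_eq_mul hn, map_add, map_mul,
    castHom_phaseDerivFst m₂ m₃ n₂ hdvd hS, castHom_phaseDerivSnd m₂ m₃ n₃ hdvd hS,
    hval]
  simp only [← Finset.mul_sum, ← Finset.sum_mul, hchar, hn, Nat.cast_mul]
  by_cases hF : phaseDerivFst m₂ m₃ n₂ x y = 0 <;>
    by_cases hG : phaseDerivSnd m₂ m₃ n₃ x y = 0 <;> simp [hF, hG, mul_comm]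

section PrimePower

variable {p : ℕ} [Fact p.Prime] {t : ℕ}

theorem ZMod.isUnit_natCast_prime_pow_iff {k : ℕ} (hk : k ≠ 0) (a : ℕ) :
    IsUnit (a : ZMod (p ^ k)) ↔ ¬ p ∣ a := by
  rw [ZMod.isUnit_iff_coprime, Nat.coprime_pow_right_iff (Nat.pos_of_ne_zero hk),
    Nat.coprime_comm, Nat.Prime.coprime_iff_not_dvd Fact.out]

theorem ZMod.isUnit_natCast_sq_add_sq (hp4 : p % 4 = 3) {k : ℕ} (hk : k ≠ 0) {a b : ℕ}
    (h : ¬ p ∣ a ∨ ¬ p ∣ b) : IsUnit ((a : ZMod (p ^ k)) ^ 2 + (b : ZMod (p ^ k)) ^ 2) := by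
  rw [← Nat.cast_pow, ← Nat.cast_pow, ← Nat.cast_add, ZMod.isUnit_natCast_prime_pow_iff hk]
  intro hdvd
  have := Nat.Prime.dvd_and_dvd_of_dvd_sq_add_sq hp4 hdvd
  tauto

theorem ZMod.isUnit_val_add_prime_pow_mul_val_iff (ht : t ≠ 0) (x u : ZMod (p ^ t)) :
    IsUnit ((x.val + p ^ t * u.val : ℕ) : ZMod (p ^ (2 * t))) ↔ IsUnit x := by
  conv_rhs => rw [← ZMod.natCast_zmod_val x]
  rw [ZMod.isUnit_natCast_prime_pow_iff (by omega), ZMod.isUnit_natCast_prime_pow_iff ht,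
    Nat.dvd_add_left ((dvd_pow_self p ht).mul_right _)]

open scoped Classical in
theorem sum_ite_isUnit_stdAddChar_phase_fiber (hp4 : p % 4 = 3) (ht : t ≠ 0)
    (m₂ m₃ n₂ n₃ : ℤ) (x y : ZMod (p ^ t)) :
    ∑ u : ZMod (p ^ t), ∑ v : ZMod (p ^ t),
      (if IsUnit ((x.val + p ^ t * u.val : ℕ) : ZMod (p ^ (2 * t)))
          ∨ IsUnit ((y.val + p ^ t * v.val : ℕ) : ZMod (p ^ (2 * t))) then
        ZMod.stdAddChar (phase m₂ m₃ n₂ n₃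
          ((x.val + p ^ t * u.val : ℕ) : ZMod (p ^ (2 * t)))
          ((y.val + p ^ t * v.val : ℕ) : ZMod (p ^ (2 * t))))
      else 0)
      = ((p ^ (2 * t) : ℕ) : ℂ) *
        if (IsUnit x ∨ IsUnit y) ∧ phaseDerivFst m₂ m₃ n₂ x y = 0
            ∧ phaseDerivSnd m₂ m₃ n₃ x y = 0 then
          ZMod.stdAddChar
            (phase m₂ m₃ n₂ n₃ (x.val : ZMod (p ^ (2 * t))) (y.val : ZMod (p ^ (2 * t))))
        else 0 := by
  simp only [ZMod.isUnit_val_add_prime_pow_mul_val_iff ht]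
  by_cases hxy : IsUnit x ∨ IsUnit y
  · have hS :
        IsUnit ((x.val : ZMod (p ^ (2 * t))) ^ 2 + (y.val : ZMod (p ^ (2 * t))) ^ 2) := by
      refine ZMod.isUnit_natCast_sq_add_sq hp4 (by omega) ?_
      simpa only [← ZMod.isUnit_natCast_prime_pow_iff ht, ZMod.natCast_zmod_val] using hxy
    simp only [hxy, if_true, true_and]
    exact sum_stdAddChar_phase_fiber (by rw [two_mul, pow_add]) m₂ m₃ n₂ n₃ x y hS
  · simp [hxy]

end PrimePower

open scoped Classical in
/-- `p`-adic stationary phase identity for the `SO(4,2)` sum `S₄` with modulus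
`p^{4t}` (`p ≡ 3 (mod 4)` prime, `t ≥ 1`):
`S₄(m₂,m₃,n₂,n₃;p^{4t}) = Σ_{a,b mod p^{2t}, gcd(a,b,p)=1}
   e(−2(m₂a−m₃b)(a²+b²)⁻¹/p^{2t}) e((n₂a+n₃b)/p^{2t})`
equals `p^{2t}` times the sum of `e((−2(m₂a−m₃b)(a²+b²)⁻¹ + n₂a + n₃b)/p^{2t})` over
the stationary points `a, b mod p^t`, `gcd(a,b,p) = 1`, satisfying
`f(a,b) ≡ g(a,b) ≡ 0 (mod p^t)` where
`f(a,b) = −2m₂(a²+b²)⁻¹ + 4(m₂a−m₃b)a(a²+b²)⁻² + n₂` and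
`g(a,b) = 2m₃(a²+b²)⁻¹ + 4(m₂a−m₃b)b(a²+b²)⁻² + n₃`
(in the second sum the phase is evaluated modulo `p^{2t}` at the lifts `a.val`,
`b.val`). -/
theorem so42_stationary_phase_r_eq_four_t (p : ℕ) [Fact p.Prime] (hp4 : p % 4 = 3)
    (t : ℕ) (ht : 1 ≤ t) (m₂ m₃ n₂ n₃ : ℤ) :
    (∑ a : ZMod (p ^ (2 * t)), ∑ b : ZMod (p ^ (2 * t)),
      if IsUnit a ∨ IsUnit b then
        eQ ((((-2 * ((m₂ : ZMod (p ^ (2 * t))) * a - (m₃ : ZMod (p ^ (2 * t))) * b)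
              * (a ^ 2 + b ^ 2)⁻¹).val : ℕ) : ℚ) / (p : ℚ) ^ (2 * t)) *
        eQ (((((n₂ : ZMod (p ^ (2 * t))) * a + (n₃ : ZMod (p ^ (2 * t))) * b).val
              : ℕ) : ℚ) / (p : ℚ) ^ (2 * t))
      else 0)
    = (p : ℂ) ^ (2 * t) *
      (∑ a : ZMod (p ^ t), ∑ b : ZMod (p ^ t),
        if (IsUnit a ∨ IsUnit b) ∧
            (-2 * (m₂ : ZMod (p ^ t)) * (a ^ 2 + b ^ 2)⁻¹
              + 4 * ((m₂ : ZMod (p ^ t)) * a - (m₃ : ZMod (p ^ t)) * b) * a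
                  * ((a ^ 2 + b ^ 2)⁻¹) ^ 2 + (n₂ : ZMod (p ^ t)) = 0) ∧
            (2 * (m₃ : ZMod (p ^ t)) * (a ^ 2 + b ^ 2)⁻¹
              + 4 * ((m₂ : ZMod (p ^ t)) * a - (m₃ : ZMod (p ^ t)) * b) * b
                  * ((a ^ 2 + b ^ 2)⁻¹) ^ 2 + (n₃ : ZMod (p ^ t)) = 0) then
          eQ ((((-2 * ((m₂ : ZMod (p ^ (2 * t))) * (a.val : ZMod (p ^ (2 * t)))
                    - (m₃ : ZMod (p ^ (2 * t))) * (b.val : ZMod (p ^ (2 * t))))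
                * (((a.val : ZMod (p ^ (2 * t)))) ^ 2
                    + ((b.val : ZMod (p ^ (2 * t)))) ^ 2)⁻¹
              + (n₂ : ZMod (p ^ (2 * t))) * (a.val : ZMod (p ^ (2 * t)))
              + (n₃ : ZMod (p ^ (2 * t))) * (b.val : ZMod (p ^ (2 * t)))).val : ℕ)
            : ℚ) / (p : ℚ) ^ (2 * t))
        else 0) := by
  have hn : p ^ (2 * t) = p ^ t * p ^ t := by rw [two_mul, pow_add]
  simp only [← Nat.cast_pow (α := ℚ) p, ← Nat.cast_pow (α := ℂ) p,
    eQ_val_div_eq_stdAddChar, ← AddChar.map_add_eq_mul, ← add_assoc]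
  rw [ZMod.sum_eq_sum_sum_val_add_mul_val hn, Finset.mul_sum]
  refine Finset.sum_congr rfl fun x _ => ?_
  rw [Finset.sum_comm, ZMod.sum_eq_sum_sum_val_add_mul_val hn, Finset.mul_sum]
  refine Finset.sum_congr rfl fun y _ => ?_
  rw [Finset.sum_comm]
  exact sum_ite_isUnit_stdAddChar_phase_fiber hp4 (by omega) m₂ m₃ n₂ n₃ x y
end
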